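/- Let L be a real N-block tridiagonal matrix with zero diagonal blocks and off-diagonal blocks −L_n^+ (size d(n)×d(n+1)) above and L_n^− (size d(n+1)×d(n)) below. Suppose there exist invertible square matrices D_1,…,D_N with (D_{n+1}D_{n+1}^T) (L_n^+)^T = L_n^− (D_n D_n^T) for all n. Then A = D^{-1} L D, where D = diag(D_1,…,D_N), is anti-Hermitian (A^T = −A). -/

import Mathlib

open Matrix

variable {N : ℕ} {d : ℕ → ℕ}

/-- The vertex type of the block decomposition: block `n` (for `n : Fin N`) has
`d n` coordinates. -/
abbrev BlockIx (N : ℕ) (d : ℕ → ℕ) := Σ n : Fin N, Fin (d n)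

/-- The block tridiagonal matrix with zero diagonal blocks, blocks `−Lp n`
(of size `d(n) × d(n+1)`) above the diagonal and `Lm n` (of size
`d(n+1) × d(n)`) below the diagonal. -/
def blockTri (N : ℕ) (d : ℕ → ℕ)
    (Lp : ∀ n : ℕ, Matrix (Fin (d n)) (Fin (d (n + 1))) ℝ)
    (Lm : ∀ n : ℕ, Matrix (Fin (d (n + 1))) (Fin (d n)) ℝ) :
    Matrix (BlockIx N d) (BlockIx N d) ℝ := fun x y =>
  if h : (y.1 : ℕ) = (x.1 : ℕ) + 1 then
    -(Lp x.1 x.2 (Fin.cast (congrArg d h) y.2))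
  else if h' : (x.1 : ℕ) = (y.1 : ℕ) + 1 then
    Lm y.1 (Fin.cast (congrArg d h') x.2) y.2
  else 0

/-- The block diagonal matrix with diagonal blocks `D 0, D 1, …`. -/
def blockDiag' (N : ℕ) (d : ℕ → ℕ)
    (D : ∀ n : ℕ, Matrix (Fin (d n)) (Fin (d n)) ℝ) :
    Matrix (BlockIx N d) (BlockIx N d) ℝ := fun x y =>
  if h : (y.1 : ℕ) = (x.1 : ℕ) then
    D x.1 x.2 (Fin.cast (congrArg d h) y.2)
  else 0

/-! Conjugation by `blockDiag' D` acts blockwise: block `(a, b)` of `D⁻¹ L D` is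
`D_a⁻¹ L^{(a,b)} D_b`. Multiplying the hypothesis by `D_{n+1}⁻¹` on the left and by `(D_nᵀ)⁻¹`
on the right turns it into `D_{n+1}⁻¹ L_n^− D_n = (D_n⁻¹ L_n^+ D_{n+1})ᵀ`, which, as all other
blocks vanish, is antisymmetry. -/

theorem mul_mul_eq_transpose_of_gram_intertwine {m n R : Type*} [Fintype m] [Fintype n]
    [DecidableEq m] [DecidableEq n] [CommRing R]
    {Lp : Matrix m n R} {Lm : Matrix n m R} {D Dinv : Matrix m m R} {E Einv : Matrix n n R}
    (hD : Dinv * D = 1) (hE : Einv * E = 1) (h : E * Eᵀ * Lpᵀ = Lm * (D * Dᵀ)) :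
    Einv * Lm * D = (Dinv * Lp * E)ᵀ := by
  have hDt : Dᵀ * Dinvᵀ = 1 := by rw [← transpose_mul, hD, transpose_one]
  calc Einv * Lm * D = Einv * (Lm * (D * Dᵀ)) * Dinvᵀ := by
        simp only [Matrix.mul_assoc, hDt, Matrix.mul_one]
    _ = Einv * E * (Eᵀ * Lpᵀ * Dinvᵀ) := by simp only [← h, Matrix.mul_assoc]
    _ = (Dinv * Lp * E)ᵀ := by
        rw [hE, Matrix.one_mul, transpose_mul, transpose_mul, Matrix.mul_assoc]

theorem transpose_eq_neg_of_submatrix_sigma {ι R : Type*} {κ : ι → Type*} [Neg R]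
    {M : Matrix (Σ a, κ a) (Σ a, κ a) R}
    (h : ∀ a b,
      (M.submatrix (Sigma.mk a) (Sigma.mk b))ᵀ = -M.submatrix (Sigma.mk b) (Sigma.mk a)) :
    Mᵀ = -M := by
  ext ⟨a, i⟩ ⟨b, j⟩
  exact congrFun (congrFun (h b a) i) j

theorem blockDiag'_mul_apply {γ : Type*} (D : ∀ n : ℕ, Matrix (Fin (d n)) (Fin (d n)) ℝ)
    (M : Matrix (BlockIx N d) γ ℝ) (a : Fin N) (i : Fin (d a)) (y : γ) :
    (blockDiag' N d D * M) ⟨a, i⟩ y = ∑ k, D a i k * M ⟨a, k⟩ y := by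
  rw [mul_apply, Fintype.sum_sigma, Finset.sum_eq_single a]
  · simp [_root_.blockDiag']
  · intro b _ hb
    simp [_root_.blockDiag', Fin.val_ne_iff.mpr hb]
  · simp

theorem mul_blockDiag'_apply {γ : Type*} (D : ∀ n : ℕ, Matrix (Fin (d n)) (Fin (d n)) ℝ)
    (M : Matrix γ (BlockIx N d) ℝ) (x : γ) (b : Fin N) (j : Fin (d b)) :
    (M * blockDiag' N d D) x ⟨b, j⟩ = ∑ k, M x ⟨b, k⟩ * D b k j := by
  rw [mul_apply, Fintype.sum_sigma, Finset.sum_eq_single b]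
  · simp [_root_.blockDiag']
  · intro a _ ha
    simp [_root_.blockDiag', Fin.val_ne_iff.mpr ha.symm]
  · simp

theorem submatrix_blockDiag'_mul_mul_blockDiag'
    (D Dinv : ∀ n : ℕ, Matrix (Fin (d n)) (Fin (d n)) ℝ)
    (M : Matrix (BlockIx N d) (BlockIx N d) ℝ) (a b : Fin N) :
    (blockDiag' N d Dinv * M * blockDiag' N d D).submatrix (Sigma.mk a) (Sigma.mk b) =
      Dinv a * M.submatrix (Sigma.mk a) (Sigma.mk b) * D b := by
  ext i j
  simp only [submatrix_apply, mul_blockDiag'_apply, blockDiag'_mul_apply]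
  simp only [mul_apply, Finset.sum_mul, submatrix_apply]

section BlockTri

variable (Lp : ∀ n : ℕ, Matrix (Fin (d n)) (Fin (d (n + 1))) ℝ)
  (Lm : ∀ n : ℕ, Matrix (Fin (d (n + 1))) (Fin (d n)) ℝ)

theorem blockTri_submatrix_succ_right (a : ℕ) (ha : a < N) (hb : a + 1 < N) :
    (blockTri N d Lp Lm).submatrix (Sigma.mk ⟨a, ha⟩) (Sigma.mk ⟨a + 1, hb⟩) = -Lp a := by
  ext i j
  simp [blockTri]

theorem blockTri_submatrix_succ_left (a : ℕ) (ha : a + 1 < N) (hb : a < N) :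
    (blockTri N d Lp Lm).submatrix (Sigma.mk ⟨a + 1, ha⟩) (Sigma.mk ⟨a, hb⟩) = Lm a := by
  ext i j
  simp [blockTri, add_assoc]

theorem blockTri_submatrix_of_not_adjacent {a b : Fin N} (hab : (b : ℕ) ≠ a + 1)
    (hba : (a : ℕ) ≠ b + 1) :
    (blockTri N d Lp Lm).submatrix (Sigma.mk a) (Sigma.mk b) = 0 := by
  ext i j
  simp [blockTri, hab, hba]

end BlockTri

theorem blockTri_antisymmetric_general (N : ℕ) (d : ℕ → ℕ)
    (Lp : ∀ n : ℕ, Matrix (Fin (d n)) (Fin (d (n + 1))) ℝ)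
    (Lm : ∀ n : ℕ, Matrix (Fin (d (n + 1))) (Fin (d n)) ℝ)
    (D Dinv : ∀ n : ℕ, Matrix (Fin (d n)) (Fin (d n)) ℝ)
    (hDl : ∀ n : ℕ, Dinv n * D n = 1)
    (hcond : ∀ n : ℕ, n + 1 < N →
      (D (n + 1) * (D (n + 1))ᵀ) * (Lp n)ᵀ = Lm n * (D n * (D n)ᵀ)) :
    (blockDiag' N d Dinv * blockTri N d Lp Lm * blockDiag' N d D)ᵀ =
      -(blockDiag' N d Dinv * blockTri N d Lp Lm * blockDiag' N d D) := by
  have hconj : ∀ n, n + 1 < N → Dinv (n + 1) * Lm n * D n = (Dinv n * Lp n * D (n + 1))ᵀ :=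
    fun n hn => mul_mul_eq_transpose_of_gram_intertwine (hDl n) (hDl (n + 1)) (hcond n hn)
  refine transpose_eq_neg_of_submatrix_sigma fun ⟨a, ha⟩ ⟨b, hb⟩ => ?_
  simp only [submatrix_blockDiag'_mul_mul_blockDiag']
  by_cases hab : b = a + 1
  · subst hab
    rw [blockTri_submatrix_succ_right, blockTri_submatrix_succ_left, hconj a hb]
    simp only [Matrix.mul_neg, Matrix.neg_mul, transpose_neg]
  by_cases hba : a = b + 1
  · subst hba
    rw [blockTri_submatrix_succ_right, blockTri_submatrix_succ_left, hconj b ha]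
    simp only [Matrix.mul_neg, Matrix.neg_mul, neg_neg, transpose_transpose]
  · rw [blockTri_submatrix_of_not_adjacent _ _ hab hba,
      blockTri_submatrix_of_not_adjacent _ _ hba hab]
    simp only [Matrix.mul_zero, Matrix.zero_mul, transpose_zero, neg_zero]

/-- If `L` is block tridiagonal with zero diagonal blocks, off-diagonal blocks
`−Lp n` above and `Lm n` below, and there are invertible square matrices `Dn`
satisfying `(D_{n+1} D_{n+1}ᵀ) (Lp n)ᵀ = Lm n (D_n D_nᵀ)` for every relevant
`n`, then `A = D⁻¹ L D` with `D = diag(D_1, …, D_N)` is anti-Hermitian: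
`Aᵀ = −A`. -/
theorem blockTri_antisymmetric (N : ℕ) (d : ℕ → ℕ)
    (Lp : ∀ n : ℕ, Matrix (Fin (d n)) (Fin (d (n + 1))) ℝ)
    (Lm : ∀ n : ℕ, Matrix (Fin (d (n + 1))) (Fin (d n)) ℝ)
    (D Dinv : ∀ n : ℕ, Matrix (Fin (d n)) (Fin (d n)) ℝ)
    (hDl : ∀ n : ℕ, Dinv n * D n = 1) (hDr : ∀ n : ℕ, D n * Dinv n = 1)
    (hcond : ∀ n : ℕ, n + 1 < N →
      (D (n + 1) * (D (n + 1))ᵀ) * (Lp n)ᵀ = Lm n * (D n * (D n)ᵀ)) :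
    (blockDiag' N d Dinv * blockTri N d Lp Lm * blockDiag' N d D)ᵀ =
      -(blockDiag' N d Dinv * blockTri N d Lp Lm * blockDiag' N d D) :=
  blockTri_antisymmetric_general N d Lp Lm D Dinv hDl hcond
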